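/- Strict positivity in type A (Case: both conditions hold): let g be of type A_n with adapted ι, 1 < k < n with ι^{(k)} > ι^{(k±1)}, and let T = [j₁,...,j_k]^A_{−P(k−1)} + ⟨λ,h_k⟩ with 1 ≤ j₁ < ⋯ < j_k ≤ n+1, j_k > k, and T ≠ λ^{(k)} (i.e., (j₁,...,j_k) ≠ (1,...,k−1,k+1)). Then every coordinate x_{m,j} with m = 1 and first occurrence (i.e., whose position l in ι satisfies l⁽⁻⁾ = 0) has nonnegative coefficient in T. -/

import Mathlib

/-! Combinatorics of an adapted sequence `ι` for a classical Lie algebra, and the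
column-tableau linear forms of Kanakubo–Nakashima in re-indexed coordinates `x_{m,j}`
(the coordinate for the `m`-th occurrence of the index `j` in `ι`). -/

noncomputable section

/-- First position `m ≥ 1` with `ι m ∈ {i, j}`. -/
def firstBoth (ι : ℕ → ℕ) (i j : ℕ) : ℕ := sInf {m | 1 ≤ m ∧ (ι m = i ∨ ι m = j)}

/-- `p_{i,j} = 1` if `i` occurs before `j` in `ι`, and `0` otherwise. -/
def pOf (ι : ℕ → ℕ) (i j : ℕ) : ℕ := if ι (firstBoth ι i j) = i then 1 else 0

/-- `ι⁽ⁱ⁾`, the first position of `ι` at which `i` occurs. -/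
def firstOcc (ι : ℕ → ℕ) (i : ℕ) : ℕ := sInf {m | 1 ≤ m ∧ ι m = i}

/-- `P(k) = p_{2,1} + p_{3,2} + ⋯ + p_{k,k-1}` (so `P 0 = P 1 = 0`). -/
def Pof (ι : ℕ → ℕ) (k : ℕ) : ℕ := ∑ i ∈ Finset.Icc 2 k, pOf ι i (i - 1)

/-- The condition that every index `1,…,n` occurs infinitely often in `ι` and
consecutive entries of `ι` differ. -/
def SeqCond (n : ℕ) (ι : ℕ → ℕ) : Prop :=
  (∀ m, 1 ≤ m → 1 ≤ ι m ∧ ι m ≤ n) ∧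
  (∀ m, 1 ≤ m → ι m ≠ ι (m + 1)) ∧
  (∀ i, 1 ≤ i → i ≤ n → ∀ N : ℕ, ∃ m, N < m ∧ ι m = i)

/-- `ι` is adapted to the type `A_n` Cartan matrix: for adjacent indices `i, j`, any two
consecutive members of the subsequence of `ι` consisting of `i`'s and `j`'s differ. -/
def AdaptedA (n : ℕ) (ι : ℕ → ℕ) : Prop :=
  ∀ i j : ℕ, 1 ≤ i → i ≤ n → 1 ≤ j → j ≤ n → (i = j + 1 ∨ j = i + 1) →
    ∀ m m' : ℕ, 1 ≤ m → m < m' → (ι m = i ∨ ι m = j) → (ι m' = i ∨ ι m' = j) →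
      (∀ r, m < r → r < m' → ι r ≠ i ∧ ι r ≠ j) → ι m ≠ ι m'

/-- Linear forms on `ℚ^∞`, presented by their coefficients in the re-indexed
coordinates `x_{m,j}`. -/
abbrev LinF : Type := ℤ × ℕ → ℚ

/-- The coordinate functional `x_{m,j}` (zero when `m ≤ 0`, `j = 0` or `j > n`). -/
def XT (n : ℕ) (m : ℤ) (j : ℕ) : LinF :=
  fun q => if q = (m, j) ∧ 1 ≤ m ∧ 1 ≤ j ∧ j ≤ n then 1 else 0

/-- The box `⌈j⌉^A_s = x_{s+P(j),j} − x_{s+P(j−1)+1,j−1}` of type `A_n`. -/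
def boxA (n : ℕ) (ι : ℕ → ℕ) (j : ℕ) (s : ℤ) : LinF :=
  XT n (s + (Pof ι j : ℤ)) j - XT n (s + (Pof ι (j - 1) : ℤ) + 1) (j - 1)

/-- The column tableau `[j₁,…,j_k]^A_s = Σ_{i=1}^k ⌈j_i⌉^A_{s+k−i}` (here `j` is
`0`-indexed: `j ⟨0⟩ = j₁, …`). -/
def tabA (n : ℕ) (ι : ℕ → ℕ) {k : ℕ} (j : Fin k → ℕ) (s : ℤ) : LinF :=
  ∑ i : Fin k, boxA n ι (j i) (s + (k : ℤ) - 1 - ((i : ℕ) : ℤ))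

/-- The Nakashima–Zelevinsky form `β_{m,j}` in re-indexed coordinates, for `ι` adapted
to a type `A` Cartan matrix:
`β_{m,j} = x_{m,j} + x_{m+1,j} − x_{m+p_{j−1,j},j−1} − x_{m+p_{j+1,j},j+1}`. -/
def betaA (n : ℕ) (ι : ℕ → ℕ) (m : ℤ) (j : ℕ) : LinF :=
  XT n m j + XT n (m + 1) j - XT n (m + (pOf ι (j - 1) j : ℤ)) (j - 1)
    - XT n (m + (pOf ι (j + 1) j : ℤ)) (j + 1)

/-- Affine-linear forms: a constant term together with a linear form. -/
abbrev AffF : Type := ℚ × LinF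

/-- The form `β⁽⁻⁾_{m,j}` in re-indexed coordinates: `β_{m−1,j}` when `m ≥ 2`, and the
`λ`-dependent form with constant term `−⟨h_j, λ⟩` when `m = 1`. -/
def betaMA (n : ℕ) (ι : ℕ → ℕ) (lam : ℕ → ℤ) (m : ℤ) (j : ℕ) : AffF :=
  ((if m = 1 then -(lam j : ℚ) else 0), betaA n ι (m - 1) j)

/-- The operator `Ŝ_{m,j}` of the polyhedral realization of `B(λ)` in re-indexed
coordinates. -/
def ShatA (n : ℕ) (ι : ℕ → ℕ) (lam : ℕ → ℤ) (m : ℤ) (j : ℕ) (φ : AffF) : AffF :=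
  if 0 < φ.2 (m, j) then φ - φ.2 (m, j) • (((0 : ℚ), betaA n ι m j) : AffF)
  else φ - φ.2 (m, j) • betaMA n ι lam m j

end

/-!
In the box `⌈J⌉_s` the coordinate `x_{1,jj}` has coefficient `-1` only if `J = jj + 1` and
`s + P(jj) = 0`, and coefficient `+1` if `J = jj` and `s + P(jj) = 1`. As the columns strictly
increase, at most one column `b` (columns indexed from `0`) contributes `-1`, and its
predecessor column, if equal to `jj`, contributes the compensating `+1`. The condition on `b`
reads `(k - 1 - b) + P(jj) = P(k - 1)`. If `b < k - 1`, monotonicity of `P` and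
`P(r) ≤ P(l) + (r - l)` force `jj = b`, so the first `b + 1` columns are `1, …, b + 1`. If
`b = k - 1`, then `P(k + 1) = P(k - 1) + 1` (this is where `ι⁽ᵏ⁾ > ι⁽ᵏ±¹⁾` enters) and `j_b > k`
force `jj = k`, and a predecessor column different from `k` would make `T = λ⁽ᵏ⁾`.
-/

open Finset

section SeqOccurrence

variable {ι : ℕ → ℕ} {i j : ℕ}

lemma apply_firstOcc (hi : ∃ m, 1 ≤ m ∧ ι m = i) : ι (firstOcc ι i) = i :=
  (Nat.sInf_mem (s := {m | 1 ≤ m ∧ ι m = i}) hi).2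

lemma firstBoth_comm (ι : ℕ → ℕ) (i j : ℕ) : firstBoth ι i j = firstBoth ι j i := by
  simp only [firstBoth, or_comm]

lemma firstBoth_eq_firstOcc_left (hi : ∃ m, 1 ≤ m ∧ ι m = i)
    (h : firstOcc ι i < firstOcc ι j) : firstBoth ι i j = firstOcc ι i := by
  have hmem : firstOcc ι i ∈ {m | 1 ≤ m ∧ ι m = i} := Nat.sInf_mem hi
  obtain ⟨m, hm, hmi⟩ := hi
  obtain ⟨hb1, hb | hb⟩ : firstBoth ι i j ∈ {m | 1 ≤ m ∧ (ι m = i ∨ ι m = j)} :=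
    Nat.sInf_mem ⟨m, hm, Or.inl hmi⟩
  · exact le_antisymm (Nat.sInf_le ⟨hmem.1, Or.inl hmem.2⟩) (Nat.sInf_le ⟨hb1, hb⟩)
  · have : firstOcc ι j ≤ firstBoth ι i j := Nat.sInf_le ⟨hb1, hb⟩
    have : firstBoth ι i j ≤ firstOcc ι i := Nat.sInf_le ⟨hmem.1, Or.inl hmem.2⟩
    omega

lemma pOf_eq_one_of_firstOcc_lt (hi : ∃ m, 1 ≤ m ∧ ι m = i)
    (h : firstOcc ι i < firstOcc ι j) : pOf ι i j = 1 := by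
  simp [pOf, firstBoth_eq_firstOcc_left hi h, apply_firstOcc hi]

lemma pOf_eq_zero_of_firstOcc_lt (hij : i ≠ j) (hj : ∃ m, 1 ≤ m ∧ ι m = j)
    (h : firstOcc ι j < firstOcc ι i) : pOf ι i j = 0 := by
  simp [pOf, firstBoth_comm ι i j, firstBoth_eq_firstOcc_left hj h, apply_firstOcc hj, Ne.symm hij]

lemma SeqCond.exists_apply_eq {n : ℕ} (hseq : SeqCond n ι) (hi1 : 1 ≤ i) (hin : i ≤ n) :
    ∃ m, 1 ≤ m ∧ ι m = i := by
  obtain ⟨m, hm, hmi⟩ := hseq.2.2 i hi1 hin 0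
  exact ⟨m, hm, hmi⟩

end SeqOccurrence

section PofBounds

variable (ι : ℕ → ℕ)

lemma pOf_le_one (i j : ℕ) : pOf ι i j ≤ 1 := by
  unfold pOf; split <;> simp

lemma Pof_mono : Monotone (Pof ι) := fun _ _ hab =>
  sum_le_sum_of_subset (Icc_subset_Icc_right hab)

lemma Pof_succ {k : ℕ} (hk : 1 ≤ k) : Pof ι (k + 1) = Pof ι k + pOf ι (k + 1) k := by
  simp [Pof, sum_Icc_succ_top (by omega : 2 ≤ k + 1)]

lemma Pof_succ_le (k : ℕ) : Pof ι (k + 1) ≤ Pof ι k + 1 := by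
  rcases Nat.eq_zero_or_pos k with rfl | hk
  · simp [Pof]
  · have := pOf_le_one ι (k + 1) k
    rw [Pof_succ ι hk]; omega

lemma Pof_succ_eq_Pof_pred_add_one {n k : ℕ} (hseq : SeqCond n ι) (hk1 : 1 < k) (hkn : k < n)
    (h1 : firstOcc ι (k + 1) < firstOcc ι k) (h2 : firstOcc ι (k - 1) < firstOcc ι k) :
    Pof ι (k + 1) = Pof ι (k - 1) + 1 := by
  obtain ⟨k, rfl⟩ : ∃ k', k = k' + 1 := ⟨k - 1, by omega⟩
  rw [Nat.add_sub_cancel] at h2 ⊢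
  rw [Pof_succ ι (by omega), Pof_succ ι (by omega),
    pOf_eq_one_of_firstOcc_lt (hseq.exists_apply_eq (by omega) (by omega)) h1,
    pOf_eq_zero_of_firstOcc_lt (by omega) (hseq.exists_apply_eq (by omega) (by omega)) h2]

end PofBounds

lemma le_add_sub_of_forall_succ_le {P : ℕ → ℕ} (hP : ∀ l, P (l + 1) ≤ P l + 1) {l r : ℕ}
    (h : l ≤ r) : P r ≤ P l + (r - l) := by
  induction r, h using Nat.le_induction with
  | base => simp
  | succ r hlr ih => have := hP r; omega

section StrictMonoFin

variable {k : ℕ} {j : Fin k → ℕ}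

lemma StrictMono.apply_add_sub_le (hj : StrictMono j) {a b : Fin k} (hab : a ≤ b) :
    j a + (b - a : ℕ) ≤ j b := by
  obtain ⟨d, hd⟩ : ∃ d, (b : ℕ) = a + d := ⟨b - a, by omega⟩
  induction d generalizing b with
  | zero => simp [Fin.ext (hd.trans (add_zero _))]
  | succ d ih =>
    have hlt : j ⟨a + d, by omega⟩ < j b :=
      hj (by rw [Fin.lt_def]; show (a : ℕ) + d < b; omega)
    have := ih (b := ⟨a + d, by omega⟩) (by rw [Fin.le_def]; simp) rfl
    simp only at this
    omega

lemma StrictMono.val_add_one_le (hj : StrictMono j) (hj_pos : ∀ a, 1 ≤ j a) (a : Fin k) :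
    (a : ℕ) + 1 ≤ j a := by
  have := hj.apply_add_sub_le (a := ⟨0, a.pos⟩) (b := a) (Fin.le_def.2 (Nat.zero_le _))
  have := hj_pos ⟨0, a.pos⟩
  simp only at *
  omega

lemma StrictMono.apply_eq_val_add_one (hj : StrictMono j) (hj_pos : ∀ a, 1 ≤ j a) {a b : Fin k}
    (hab : a ≤ b) (hb : j b ≤ b + 1) : j a = a + 1 := by
  have := hj.apply_add_sub_le hab
  have := hj.val_add_one_le hj_pos a
  rw [Fin.le_def] at hab
  omega

end StrictMonoFin

section Boxes

variable {n : ℕ}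

lemma XT_nonneg (m : ℤ) (j : ℕ) (q : ℤ × ℕ) : 0 ≤ XT n m j q := by
  unfold XT; split <;> norm_num

lemma XT_le_one (m : ℤ) (j : ℕ) (q : ℤ × ℕ) : XT n m j q ≤ 1 := by
  unfold XT; split <;> norm_num

lemma XT_apply_of_ne {m : ℤ} {j : ℕ} {q : ℤ × ℕ} (h : q ≠ (m, j)) : XT n m j q = 0 :=
  if_neg fun h' => h h'.1

lemma XT_apply_self {m : ℤ} {j : ℕ} (hm : 1 ≤ m) (hj1 : 1 ≤ j) (hjn : j ≤ n) :
    XT n m j (m, j) = 1 :=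
  if_pos ⟨rfl, hm, hj1, hjn⟩

variable (ι : ℕ → ℕ)

lemma neg_one_le_boxA_apply (J : ℕ) (s : ℤ) (q : ℤ × ℕ) : -1 ≤ boxA n ι J s q := by
  have := XT_nonneg (n := n) (s + Pof ι J) J q
  have := XT_le_one (n := n) (s + Pof ι (J - 1) + 1) (J - 1) q
  simp only [boxA, Pi.sub_apply]
  linarith

lemma boxA_apply_one_nonneg {J jj : ℕ} {s : ℤ} (hjj : 1 ≤ jj)
    (h : ¬(J = jj + 1 ∧ s + Pof ι jj = 0)) : 0 ≤ boxA n ι J s (1, jj) := by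
  have hneg : XT n (s + Pof ι (J - 1) + 1) (J - 1) (1, jj) = 0 := by
    refine XT_apply_of_ne fun he => h ?_
    simp only [Prod.mk.injEq] at he
    obtain rfl : J = jj + 1 := by omega
    simp only [Nat.add_sub_cancel] at he
    exact ⟨rfl, by omega⟩
  simp only [boxA, Pi.sub_apply, hneg, sub_zero]
  exact XT_nonneg _ _ _

lemma boxA_self_apply_one {jj : ℕ} {s : ℤ} (h1 : 1 ≤ jj) (hn : jj ≤ n)
    (hs : s + Pof ι jj = 1) : boxA n ι jj s (1, jj) = 1 := by
  rw [boxA, Pi.sub_apply, hs, XT_apply_self le_rfl h1 hn,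
    XT_apply_of_ne (by simp only [ne_eq, Prod.mk.injEq]; omega), sub_zero]

end Boxes

lemma Fintype.sum_nonneg_of_pair {α M : Type*} [Fintype α] [AddCommMonoid M]
    [PartialOrder M] [IsOrderedAddMonoid M] {f : α → M} {a b : α} (hab : a ≠ b)
    (hpair : 0 ≤ f a + f b) (hrest : ∀ c, c ≠ a → c ≠ b → 0 ≤ f c) :
    0 ≤ ∑ c, f c := by
  classical
  rw [← add_sum_erase _ _ (mem_univ a),
    ← add_sum_erase _ _ (mem_erase.2 ⟨hab.symm, mem_univ b⟩), ← add_assoc]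
  refine add_nonneg hpair (Finset.sum_nonneg fun c hc => ?_)
  simp only [mem_erase] at hc
  exact hrest c hc.2.1 hc.1

section Columns

variable {k : ℕ} {j : Fin k → ℕ} {P : ℕ → ℕ}

lemma exists_prev_column_eq (hP : Monotone P) (hP_succ : ∀ l, P (l + 1) ≤ P l + 1)
    (hPk : P (k + 1) = P (k - 1) + 1) (hj : StrictMono j) (hj_pos : ∀ a, 1 ≤ j a)
    (hlast : ∀ a : Fin k, (a : ℕ) = k - 1 → k < j a)
    (hne : j ≠ fun a : Fin k => if (a : ℕ) < k - 1 then (a : ℕ) + 1 else k + 1)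
    {jj : ℕ} (hjj : 1 ≤ jj) {b : Fin k} (hjb : j b = jj + 1)
    (hb : k - 1 - b + P jj = P (k - 1)) :
    ∃ a : Fin k, (a : ℕ) + 1 = b ∧ j a = jj := by
  rcases eq_or_ne (b : ℕ) (k - 1) with hbk | hbk
  · have hjjk : jj = k := by
      have := hlast b hbk
      by_contra h
      have := hP (show k + 1 ≤ jj by omega)
      omega
    by_contra! hnone
    apply hne
    funext a
    split_ifs with ha
    · have hc : k - 2 < k := by omega
      have hlt : j ⟨k - 2, hc⟩ < j b := hj (by rw [Fin.lt_def]; show k - 2 < (b : ℕ); omega)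
      have hne' : j ⟨k - 2, hc⟩ ≠ jj := hnone _ (by show k - 2 + 1 = (b : ℕ); omega)
      exact hj.apply_eq_val_add_one hj_pos (b := ⟨k - 2, hc⟩)
        (by rw [Fin.le_def]; show (a : ℕ) ≤ k - 2; omega) (by show j _ ≤ k - 2 + 1; omega)
    · rw [Fin.ext (show (a : ℕ) = b by omega), hjb, hjjk]
  · have hjk : jj < k - 1 := by
      by_contra h
      have := hP (show k - 1 ≤ jj by omega)
      omega
    have := le_add_sub_of_forall_succ_le hP_succ hjk.le
    have := hj.val_add_one_le hj_pos b
    have hjjb : jj = b := by omega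
    have hprev := hj.apply_eq_val_add_one hj_pos (a := ⟨jj - 1, by omega⟩) (b := b)
      (by rw [Fin.le_def]; show jj - 1 ≤ (b : ℕ); omega) (by omega)
    exact ⟨⟨jj - 1, by omega⟩, by show jj - 1 + 1 = (b : ℕ); omega,
      by rw [hprev]; show jj - 1 + 1 = jj; omega⟩

end Columns

theorem tabA_first_coeff_nonneg_general (n : ℕ) (ι : ℕ → ℕ)
    (hseq : SeqCond n ι)
    (k : ℕ) (hk1 : 1 < k) (hkn : k < n)
    (h1 : firstOcc ι (k + 1) < firstOcc ι k)
    (h2 : firstOcc ι (k - 1) < firstOcc ι k)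
    (j : Fin k → ℕ) (hmono : StrictMono j)
    (hrange : ∀ i, 1 ≤ j i ∧ j i ≤ n + 1)
    (hlast : ∀ i : Fin k, (i : ℕ) = k - 1 → k < j i)
    (hne : j ≠ fun i : Fin k => if (i : ℕ) < k - 1 then (i : ℕ) + 1 else k + 1) :
    ∀ jj : ℕ, 1 ≤ jj → jj ≤ n →
      0 ≤ tabA n ι j (-(Pof ι (k - 1) : ℤ)) (1, jj) := by
  intro jj hjj1 hjjn
  simp only [tabA, Finset.sum_apply]
  by_cases hneg : ∃ b : Fin k, j b = jj + 1 ∧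
      -(Pof ι (k - 1) : ℤ) + k - 1 - (b : ℕ) + Pof ι jj = 0
  · obtain ⟨b, hjb, hb⟩ := hneg
    obtain ⟨a, hab, hja⟩ := exists_prev_column_eq (Pof_mono ι) (Pof_succ_le ι)
      (Pof_succ_eq_Pof_pred_add_one ι hseq hk1 hkn h1 h2) hmono (fun a => (hrange a).1)
      hlast hne hjj1 hjb (by omega)
    refine Fintype.sum_nonneg_of_pair (a := a) (b := b) (fun h => by omega) ?_ fun c _ hcb => ?_
    · rw [hja, boxA_self_apply_one ι hjj1 hjjn (by omega)]
      linarith [neg_one_le_boxA_apply (n := n) ι (j b)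
        (-(Pof ι (k - 1) : ℤ) + k - 1 - (b : ℕ)) (1, jj)]
    · exact boxA_apply_one_nonneg ι hjj1 fun h => hcb (hmono.injective (h.1.trans hjb.symm))
  · exact Finset.sum_nonneg fun a _ => boxA_apply_one_nonneg ι hjj1 fun h => hneg ⟨a, h⟩

/-- Strict positivity in type `A` (case where both conditions hold): for `ι` adapted,
`1 < k < n` with `ι⁽ᵏ⁾ > ι⁽ᵏ⁺¹⁾` and `ι⁽ᵏ⁾ > ι⁽ᵏ⁻¹⁾`, and a column tableau
`T = [j₁,…,j_k]^A_{−P(k−1)} + ⟨λ,h_k⟩` with `1 ≤ j₁ < ⋯ < j_k ≤ n+1`, `j_k > k` and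
`T ≠ λ⁽ᵏ⁾` (i.e. `(j₁,…,j_k) ≠ (1,…,k−1,k+1)`), every coordinate `x_{1,j}` (the first
occurrence of `j`, i.e. the coordinates `x_l` with `l⁽⁻⁾ = 0`) has nonnegative
coefficient in `T`.  (Columns are `0`-indexed, `a ↦ j_{a+1}`.) -/
theorem tabA_first_coeff_nonneg (n : ℕ) (ι : ℕ → ℕ) (lam : ℕ → ℤ)
    (hseq : SeqCond n ι) (had : AdaptedA n ι)
    (k : ℕ) (hk1 : 1 < k) (hkn : k < n)
    (h1 : firstOcc ι (k + 1) < firstOcc ι k)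
    (h2 : firstOcc ι (k - 1) < firstOcc ι k)
    (j : Fin k → ℕ) (hmono : StrictMono j)
    (hrange : ∀ i, 1 ≤ j i ∧ j i ≤ n + 1)
    (hlast : ∀ i : Fin k, (i : ℕ) = k - 1 → k < j i)
    (hne : j ≠ fun i : Fin k => if (i : ℕ) < k - 1 then (i : ℕ) + 1 else k + 1) :
    ∀ jj : ℕ, 1 ≤ jj → jj ≤ n →
      0 ≤ tabA n ι j (-(Pof ι (k - 1) : ℤ)) (1, jj) :=
  tabA_first_coeff_nonneg_general n ι hseq k hk1 hkn h1 h2 j hmono hrange hlast hne
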